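/- arXiv:2005.13268 — 5 statements merged into one kernel-verified Lean document; each statement's English description precedes it below -/
import Mathlib

section
/- Let R₀ > 0 and λ ∈ ℝ. For all x, y ∈ ℝ³ with |y| ≤ R₀ ≤ |x|/2 and all θ ∈ [0,1], one has |x − θy| ≥ |x|/2 and (1 + 2|λ|R₀)(1 + s(λ(x − θy))) ≥ 1 + s(λx), where s(z) = |z| + z₁. -/
/-!
Both terms of the wake function `s(z) = ‖z‖ + z₀` (the paper's first coordinate `z₁` is index `0`)
are 1-Lipschitz and `|z₀| ≤ ‖z‖`, so `s ≥ 0` and `s(a) ≤ s(b) + 2‖a - b‖`. With `a = λx` and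
`b = λ(x - θy)` one has `‖a - b‖ ≤ |λ| R₀`, and `1 + s(b) + 2|λ|R₀ ≤ (1 + 2|λ|R₀)(1 + s(b))`
because `s(b) ≥ 0`.
-/

namespace PiLp

variable {p : ENNReal} [Fact (1 ≤ p)] {ι : Type*} [Fintype ι]

noncomputable def wake (i : ι) (z : PiLp p fun _ : ι => ℝ) : ℝ := ‖z‖ + z i

theorem wake_nonneg (i : ι) (z : PiLp p fun _ : ι => ℝ) : 0 ≤ wake i z := by
  have := (abs_le.mp (norm_apply_le z i)).1
  unfold wake
  linarith

theorem wake_le_wake_add_two_mul_norm_sub (i : ι) (a b : PiLp p fun _ : ι => ℝ) :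
    wake i a ≤ wake i b + 2 * ‖a - b‖ := by
  have hnorm : ‖a‖ ≤ ‖b‖ + ‖a - b‖ := norm_le_norm_add_norm_sub' a b
  have hcoord : a i - b i ≤ ‖a - b‖ := (abs_le.mp (norm_apply_le (a - b) i)).2
  unfold wake
  linarith

end PiLp

theorem one_add_le_mul_one_add {s t c : ℝ} (hs : 0 ≤ s) (hc : 0 ≤ c) (hts : t ≤ s + c) :
    1 + t ≤ (1 + c) * (1 + s) := by
  nlinarith [mul_nonneg hc hs]

theorem wake_estimates_segment_general (R₀ lam : ℝ)
    (x y : EuclideanSpace ℝ (Fin 3)) (θ : ℝ)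
    (hy : ‖y‖ ≤ R₀) (hx : R₀ ≤ ‖x‖ / 2) (hθ : θ ∈ Set.Icc (0 : ℝ) 1) :
    ‖x‖ / 2 ≤ ‖x - θ • y‖ ∧
      1 + (‖lam • x‖ + (lam • x) 0) ≤
        (1 + 2 * |lam| * R₀) *
          (1 + (‖lam • (x - θ • y)‖ + (lam • (x - θ • y)) 0)) := by
  have hθy : ‖θ • y‖ ≤ R₀ := by
    rw [norm_smul, Real.norm_of_nonneg hθ.1]
    exact (mul_le_of_le_one_left (norm_nonneg y) hθ.2).trans hy
  refine ⟨by linarith [norm_sub_norm_le x (θ • y)], ?_⟩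
  have hdiff : ‖lam • x - lam • (x - θ • y)‖ ≤ |lam| * R₀ := by
    rw [← smul_sub, sub_sub_cancel, norm_smul, Real.norm_eq_abs]
    exact mul_le_mul_of_nonneg_left hθy (abs_nonneg lam)
  have hR₀ : 0 ≤ |lam| * R₀ := mul_nonneg (abs_nonneg lam) ((norm_nonneg y).trans hy)
  have hwake : PiLp.wake 0 (lam • x) ≤ PiLp.wake 0 (lam • (x - θ • y)) + 2 * (|lam| * R₀) :=
    (PiLp.wake_le_wake_add_two_mul_norm_sub 0 _ _).trans (by linarith)
  rw [mul_assoc]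
  exact one_add_le_mul_one_add (PiLp.wake_nonneg 0 _) (by positivity) hwake

/-- For `‖y‖ ≤ R₀ ≤ ‖x‖/2` and `θ ∈ [0,1]`: `‖x - θ y‖ ≥ ‖x‖/2` and
`(1 + 2|λ|R₀)(1 + s(λ(x - θy))) ≥ 1 + s(λ x)` where `s z = ‖z‖ + z₁`. -/
theorem wake_estimates_segment (R₀ lam : ℝ) (hR₀ : 0 < R₀)
    (x y : EuclideanSpace ℝ (Fin 3)) (θ : ℝ)
    (hy : ‖y‖ ≤ R₀) (hx : R₀ ≤ ‖x‖ / 2) (hθ : θ ∈ Set.Icc (0 : ℝ) 1) :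
    ‖x‖ / 2 ≤ ‖x - θ • y‖ ∧
      1 + (‖lam • x‖ + (lam • x) 0) ≤
        (1 + 2 * |lam| * R₀) *
          (1 + (‖lam • (x - θ • y)‖ + (lam • (x - θ • y)) 0)) :=
  wake_estimates_segment_general R₀ lam x y θ hy hx hθ
end

section
/- Let f : ℝ³ → ℝ be C¹ with |∇f(z)| ≤ K[|z|(1 + s(λz))]^{-3/2} for |z| ≥ R₀, where s(z) = |z| + z₁ and λ ≠ 0. Let g : ℝ³ → ℝ be supported in the ball B_{R₀} with ∫|g| ≤ M. Then for |x| ≥ 2R₀, |(f ∗ g)(x) − f(x)∫g(y)dy| ≤ C K M [|x|(1 + s(λx))]^{-3/2}, with C depending on λ, R₀. -/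
/-!
By the mean value theorem, `|f(x - y) - f(x)| ≤ R₀ sup |∇f|` over the ball `B(x, R₀)`, which
contains the support of `g` translated to `x`. On that ball `|z| ≥ |x| / 2`, and since
`s(z) = |z| + z₁` is 2-Lipschitz, `1 + s(λx) ≤ (1 + 2|λ|R₀)(1 + s(λz))`; hence the weight
`|z|(1 + s(λz))` is comparable to its value at `x`, with factor `2(1 + 2|λ|R₀)`. Integrating the
pointwise bound against `|g|` gives the estimate with `C = R₀ (2(1 + 2|λ|R₀))^{3/2}`.
-/

open MeasureTheory

theorem abs_integral_mul_sub_const_mul_le {α : Type*} [MeasurableSpace α] {μ : Measure α}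
    {F G : α → ℝ} {c ε : ℝ} (hF : AEStronglyMeasurable F μ) (hG : Integrable G μ)
    (hFc : ∀ y, G y ≠ 0 → |F y - c| ≤ ε) :
    |(∫ y, F y * G y ∂μ) - c * ∫ y, G y ∂μ| ≤ ε * ∫ y, |G y| ∂μ := by
  have hpointwise : ∀ y, |(F y - c) * G y| ≤ ε * |G y| := fun y => by
    by_cases hGy : G y = 0
    · simp [hGy]
    · rw [abs_mul]; exact mul_le_mul_of_nonneg_right (hFc y hGy) (abs_nonneg _)
  have hbound : Integrable (fun y => ε * |G y|) μ := hG.abs.const_mul ε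
  have hdiff : Integrable (fun y => (F y - c) * G y) μ :=
    hbound.mono' ((hF.sub aestronglyMeasurable_const).mul hG.1) (.of_forall hpointwise)
  have hFG : Integrable (fun y => F y * G y) μ :=
    (hdiff.add (hG.const_mul c)).congr (.of_forall fun y => by simp only [Pi.add_apply]; ring)
  have hsplit : (∫ y, F y * G y ∂μ) - c * ∫ y, G y ∂μ = ∫ y, (F y - c) * G y ∂μ := by
    rw [← integral_const_mul, ← integral_sub hFG (hG.const_mul c)]
    simp only [sub_mul]
  calc |(∫ y, F y * G y ∂μ) - c * ∫ y, G y ∂μ|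
      ≤ ∫ y, |(F y - c) * G y| ∂μ := hsplit ▸ abs_integral_le_integral_abs
    _ ≤ ∫ y, ε * |G y| ∂μ := integral_mono hdiff.abs hbound hpointwise
    _ = ε * ∫ y, |G y| ∂μ := integral_const_mul ε _

theorem abs_sub_le_of_norm_fderiv_le_on_closedBall {E : Type*} [NormedAddCommGroup E]
    [NormedSpace ℝ E] {f : E → ℝ} (hf : Differentiable ℝ f) {x y : E} {R B : ℝ} (hR : 0 ≤ R)
    (hB : ∀ z ∈ Metric.closedBall x R, ‖fderiv ℝ f z‖ ≤ B) (hy : ‖y‖ ≤ R) :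
    |f (x - y) - f x| ≤ B * R := by
  have hxy : x - y ∈ Metric.closedBall x R := by
    rwa [mem_closedBall_iff_norm, sub_sub_cancel_left, norm_neg]
  have hmvt := (convex_closedBall x R).norm_image_sub_le_of_norm_fderiv_le
    (fun z _ => hf z) hB (Metric.mem_closedBall_self hR) hxy
  rw [Real.norm_eq_abs, sub_sub_cancel_left, norm_neg] at hmvt
  have hB0 : 0 ≤ B := (norm_nonneg _).trans (hB x (Metric.mem_closedBall_self hR))
  exact hmvt.trans (mul_le_mul_of_nonneg_left hy hB0)

theorem norm_le_two_mul_norm_of_norm_sub_le {E : Type*} [SeminormedAddCommGroup E] {x z : E}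
    {R : ℝ} (hx : 2 * R ≤ ‖x‖) (hxz : ‖x - z‖ ≤ R) : ‖x‖ ≤ 2 * ‖z‖ := by
  linarith [norm_sub_norm_le x z]

theorem Real.rpow_neg_le_mul_rpow_neg_of_le_mul {a b D p : ℝ} (ha : 0 < a) (hD : 0 < D)
    (hp : 0 ≤ p) (h : a ≤ D * b) : b ^ (-p) ≤ D ^ p * a ^ (-p) :=
  calc b ^ (-p) ≤ (a / D) ^ (-p) :=
        Real.rpow_le_rpow_of_nonpos (by positivity) (by rwa [div_le_iff₀' hD]) (by linarith)
    _ = D ^ p * a ^ (-p) := by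
        rw [Real.div_rpow ha.le hD.le, Real.rpow_neg hD.le, div_inv_eq_mul, mul_comm]

section WakeWeight

variable {ι : Type*} [Fintype ι] {p : ENNReal} [Fact (1 ≤ p)]

theorem PiLp.norm_add_apply_nonneg (v : PiLp p fun _ : ι => ℝ) (i : ι) : 0 ≤ ‖v‖ + v i := by
  have := PiLp.norm_apply_le v i
  rw [Real.norm_eq_abs] at this
  linarith [neg_abs_le (v i)]

theorem PiLp.norm_add_apply_le (v w : PiLp p fun _ : ι => ℝ) (i : ι) :
    ‖v‖ + v i ≤ ‖w‖ + w i + 2 * ‖v - w‖ := by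
  have hcoord := PiLp.norm_apply_le (v - w) i
  rw [PiLp.sub_apply, Real.norm_eq_abs] at hcoord
  linarith [norm_sub_norm_le v w, le_abs_self (v i - w i)]

/-- The paper's `|z| (1 + s(λz))`, where `s(z) = |z| + zᵢ`. -/
noncomputable def wakeWeight (lam : ℝ) (i : ι) (z : PiLp p fun _ : ι => ℝ) : ℝ :=
  ‖z‖ * (1 + (‖lam • z‖ + (lam • z) i))

theorem wakeWeight_pos (lam : ℝ) (i : ι) {z : PiLp p fun _ : ι => ℝ} (hz : z ≠ 0) :
    0 < wakeWeight lam i z :=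
  mul_pos (norm_pos_iff.mpr hz) (by linarith [PiLp.norm_add_apply_nonneg (lam • z) i])

theorem wakeWeight_le_mul_of_norm_sub_le (lam : ℝ) (i : ι) {x z : PiLp p fun _ : ι => ℝ}
    {R : ℝ} (hx : 2 * R ≤ ‖x‖) (hxz : ‖x - z‖ ≤ R) :
    wakeWeight lam i x ≤ 2 * (1 + 2 * |lam| * R) * wakeWeight lam i z := by
  have hR : 0 ≤ |lam| * R := mul_nonneg (abs_nonneg lam) ((norm_nonneg _).trans hxz)
  have hsz := PiLp.norm_add_apply_nonneg (lam • z) i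
  have hs : ‖lam • x‖ + (lam • x) i ≤ ‖lam • z‖ + (lam • z) i + 2 * (|lam| * R) := by
    have hdist : ‖lam • x - lam • z‖ ≤ |lam| * R := by
      rw [← smul_sub, norm_smul, Real.norm_eq_abs]
      exact mul_le_mul_of_nonneg_left hxz (abs_nonneg lam)
    linarith [PiLp.norm_add_apply_le (lam • x) (lam • z) i]
  have hfactor : 1 + (‖lam • x‖ + (lam • x) i)
      ≤ (1 + 2 * |lam| * R) * (1 + (‖lam • z‖ + (lam • z) i)) := by
    nlinarith
  calc wakeWeight lam i x ≤ (2 * ‖z‖) * ((1 + 2 * |lam| * R) * (1 + (‖lam • z‖ + (lam • z) i))) :=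
        mul_le_mul (norm_le_two_mul_norm_of_norm_sub_le hx hxz) hfactor
          (by linarith [PiLp.norm_add_apply_nonneg (lam • x) i]) (by positivity)
    _ = 2 * (1 + 2 * |lam| * R) * wakeWeight lam i z := by unfold wakeWeight; ring

end WakeWeight

theorem conv_leading_term_estimate_general (lam R₀ : ℝ) (hR₀ : 0 < R₀) :
    ∃ C > 0, ∀ (K M : ℝ) (f g : EuclideanSpace ℝ (Fin 3) → ℝ),
      ContDiff ℝ 1 f →
      (∀ z, R₀ ≤ ‖z‖ →
        ‖fderiv ℝ f z‖ ≤ K * (‖z‖ * (1 + (‖lam • z‖ + (lam • z) 0))) ^ (-(3 / 2 : ℝ))) →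
      Integrable g →
      Function.support g ⊆ Metric.ball (0 : EuclideanSpace ℝ (Fin 3)) R₀ →
      (∫ y, |g y|) ≤ M →
      ∀ x : EuclideanSpace ℝ (Fin 3), 2 * R₀ ≤ ‖x‖ →
        |(∫ y, f (x - y) * g y) - f x * ∫ y, g y|
          ≤ C * K * M * (‖x‖ * (1 + (‖lam • x‖ + (lam • x) 0))) ^ (-(3 / 2 : ℝ)) := by
  set D := 2 * (1 + 2 * |lam| * R₀)
  refine ⟨R₀ * D ^ (3 / 2 : ℝ), by positivity, fun K M f g hf hfd hg hsupp hgM x hx => ?_⟩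
  have hx0 : x ≠ 0 := norm_pos_iff.mp (by linarith)
  have hwx := wakeWeight_pos lam 0 hx0
  have hK : 0 ≤ K := nonneg_of_mul_nonneg_left ((norm_nonneg _).trans (hfd x (by linarith)))
    (Real.rpow_pos_of_pos hwx _)
  set B := K * (D ^ (3 / 2 : ℝ) * wakeWeight lam 0 x ^ (-(3 / 2 : ℝ)))
  have hderiv : ∀ z ∈ Metric.closedBall x R₀, ‖fderiv ℝ f z‖ ≤ B := fun z hz => by
    rw [Metric.mem_closedBall, dist_comm, dist_eq_norm] at hz
    refine (hfd z ?_).trans (mul_le_mul_of_nonneg_left ?_ hK)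
    · linarith [norm_le_two_mul_norm_of_norm_sub_le hx hz]
    · exact Real.rpow_neg_le_mul_rpow_neg_of_le_mul hwx (by positivity) (by norm_num)
        (wakeWeight_le_mul_of_norm_sub_le lam 0 hx hz)
  have hmvt : ∀ y, g y ≠ 0 → |f (x - y) - f x| ≤ B * R₀ := fun y hy =>
    abs_sub_le_of_norm_fderiv_le_on_closedBall (hf.differentiable one_ne_zero) hR₀.le hderiv
      (mem_ball_zero_iff.mp (hsupp hy)).le
  calc |(∫ y, f (x - y) * g y) - f x * ∫ y, g y| ≤ B * R₀ * ∫ y, |g y| :=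
        abs_integral_mul_sub_const_mul_le
          (hf.continuous.comp (continuous_const.sub continuous_id)).aestronglyMeasurable hg hmvt
    _ ≤ B * R₀ * M := mul_le_mul_of_nonneg_left hgM (by positivity)
    _ = _ := by unfold B wakeWeight; ring

/-- Leading-term estimate: if `‖∇f(z)‖ ≤ K [|z|(1+s(λz))]^{-3/2}` for `|z| ≥ R₀` and `g` is
supported in `B_{R₀}` with `∫|g| ≤ M`, then for `|x| ≥ 2R₀` the convolution satisfies
`|(f ∗ g)(x) - f(x) ∫ g| ≤ C K M [|x|(1+s(λx))]^{-3/2}`. -/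
theorem conv_leading_term_estimate (lam R₀ : ℝ) (hlam : lam ≠ 0) (hR₀ : 0 < R₀) :
    ∃ C > 0, ∀ (K M : ℝ) (f g : EuclideanSpace ℝ (Fin 3) → ℝ),
      ContDiff ℝ 1 f →
      (∀ z, R₀ ≤ ‖z‖ →
        ‖fderiv ℝ f z‖ ≤ K * (‖z‖ * (1 + (‖lam • z‖ + (lam • z) 0))) ^ (-(3 / 2 : ℝ))) →
      Integrable g →
      Function.support g ⊆ Metric.ball (0 : EuclideanSpace ℝ (Fin 3)) R₀ →
      (∫ y, |g y|) ≤ M →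
      ∀ x : EuclideanSpace ℝ (Fin 3), 2 * R₀ ≤ ‖x‖ →
        |(∫ y, f (x - y) * g y) - f x * ∫ y, g y|
          ≤ C * K * M * (‖x‖ * (1 + (‖lam • x‖ + (lam • x) 0))) ^ (-(3 / 2 : ℝ)) :=
  conv_leading_term_estimate_general lam R₀ hR₀
end

section
/- Let A ≥ 2, B ≥ 0 with A + min{1,B} > 3. If g : ℝ³ → ℝ satisfies |g(x)| ≤ M(1+|x|)^{-A}(1+s(x))^{-B}, then g ∈ L¹(ℝ³). -/
/-!
With `c = min 1 B`, the weight `(1 + |x|)^(-A) (1 + s(x))^(-c)` is dominated by the product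
`∏ᵢ (1 + |xᵢ|)^(-(A + c)/3)`, which is integrable since `(A + c)/3 > 1`. The key is the transverse
bound `(1 + |x₂|)(1 + |x₃|) ≤ (1 + |x|)(1 + s(x))`: raised to the power `c` it absorbs the factor
`(1 + s)^c`, and the remaining powers of `1 + |xᵢ|` are bounded by powers of `1 + |x|`.
-/

open MeasureTheory Real

lemma integrable_one_add_abs_rpow_neg {a : ℝ} (ha : 1 < a) :
    Integrable fun t : ℝ => (1 + |t|) ^ (-a) := by
  simpa [Real.norm_eq_abs] using
    integrable_one_add_norm (E := ℝ) (μ := volume) (r := a) (by simpa using ha)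

lemma EuclideanSpace.integrable_prod_one_add_abs_rpow_neg {ι : Type*} [Fintype ι] {a : ℝ}
    (ha : 1 < a) : Integrable fun x : EuclideanSpace ℝ ι => ∏ i, (1 + |x i|) ^ (-a) :=
  (PiLp.volume_preserving_ofLp ι).integrable_comp_of_integrable
    (Integrable.fintype_prod (f := fun _ t => (1 + |t|) ^ (-a))
      fun _ => integrable_one_add_abs_rpow_neg ha)

/-- The wake function `s(x) = |x| + x₁`; the paper's `x₁` is `x 0`. -/
noncomputable def wake (x : EuclideanSpace ℝ (Fin 3)) : ℝ := ‖x‖ + x 0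

lemma wake_nonneg (x : EuclideanSpace ℝ (Fin 3)) : 0 ≤ wake x := by
  have := (abs_le.mp (PiLp.norm_apply_le x 0)).1
  unfold wake
  linarith

/-- Transversally to the wake, `x₂² + x₃² = (|x| - x₁) s(x) ≤ 2 |x| s(x)`, and
`(1 + |x₂|)(1 + |x₃|) ≤ 1 + √(2(x₂² + x₃²)) + (x₂² + x₃²)/2`. -/
lemma one_add_abs_mul_one_add_abs_le_wake (x : EuclideanSpace ℝ (Fin 3)) :
    (1 + |x 1|) * (1 + |x 2|) ≤ (1 + ‖x‖) * (1 + wake x) := by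
  have hnorm : ‖x‖ ^ 2 = x 0 ^ 2 + x 1 ^ 2 + x 2 ^ 2 := by
    rw [EuclideanSpace.real_norm_sq_eq, Fin.sum_univ_three]
  have hs := wake_nonneg x
  have h0 := (abs_le.mp (PiLp.norm_apply_le x 0)).2
  have htrans : x 1 ^ 2 + x 2 ^ 2 ≤ 2 * ‖x‖ * wake x := by
    unfold wake at hs ⊢
    nlinarith
  have hsum : |x 1| + |x 2| ≤ ‖x‖ + wake x := by
    refine (pow_le_pow_iff_left₀ (by positivity) (by positivity) two_ne_zero).mp ?_
    nlinarith [sq_abs (x 1), sq_abs (x 2), sq_nonneg (|x 1| - |x 2|), sq_nonneg (‖x‖ - wake x)]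
  have hprod : |x 1| * |x 2| ≤ ‖x‖ * wake x := by
    nlinarith [sq_abs (x 1), sq_abs (x 2), sq_nonneg (|x 1| - |x 2|)]
  nlinarith

lemma prod_one_add_abs_rpow_le_wake {A c : ℝ} (hc : 0 ≤ c) (hcA : 2 * c ≤ A)
    (x : EuclideanSpace ℝ (Fin 3)) :
    ∏ i, (1 + |x i|) ^ ((A + c) / 3) ≤ (1 + ‖x‖) ^ A * (1 + wake x) ^ c := by
  have h0 : |x 0| ≤ ‖x‖ := PiLp.norm_apply_le x 0
  have hPR : (1 + |x 1|) * (1 + |x 2|) ≤ (1 + ‖x‖) * (1 + ‖x‖) := by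
    have := PiLp.norm_apply_le x 1
    have := PiLp.norm_apply_le x 2
    simp only [Real.norm_eq_abs] at *
    gcongr
  have hPS := one_add_abs_mul_one_add_abs_le_wake x
  have hR : 0 < 1 + ‖x‖ := by positivity
  have hS : 0 ≤ 1 + wake x := by linarith [wake_nonneg x]
  set a := (A + c) / 3
  have hca : c ≤ a := by simp only [a]; linarith
  set P := (1 + |x 1|) * (1 + |x 2|)
  have hP : 0 < P := by positivity
  calc ∏ i, (1 + |x i|) ^ a = (1 + |x 0|) ^ a * P ^ (a - c) * P ^ c := by
        rw [Fin.prod_univ_three, mul_assoc, ← mul_rpow (by positivity) (by positivity),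
          mul_assoc, ← rpow_add hP, sub_add_cancel]
    _ ≤ (1 + ‖x‖) ^ a * ((1 + ‖x‖) * (1 + ‖x‖)) ^ (a - c) * ((1 + ‖x‖) * (1 + wake x)) ^ c := by
        gcongr
        linarith
    _ = (1 + ‖x‖) ^ A * (1 + wake x) ^ c := by
        rw [mul_rpow hR.le hR.le, mul_rpow hR.le hS, ← mul_assoc, ← rpow_add hR, ← rpow_add hR,
          ← rpow_add hR]
        congr 2
        ring

lemma one_add_norm_rpow_neg_mul_wake_le_prod {A c : ℝ} (hc : 0 ≤ c) (hcA : 2 * c ≤ A)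
    (x : EuclideanSpace ℝ (Fin 3)) :
    (1 + ‖x‖) ^ (-A) * (1 + wake x) ^ (-c) ≤ ∏ i, (1 + |x i|) ^ (-((A + c) / 3)) := by
  have hS : 0 ≤ 1 + wake x := by linarith [wake_nonneg x]
  have hprod (i : Fin 3) : (1 + |x i|) ^ (-((A + c) / 3)) = ((1 + |x i|) ^ ((A + c) / 3))⁻¹ :=
    rpow_neg (by positivity) _
  rw [rpow_neg (by positivity), rpow_neg hS, ← mul_inv, Finset.prod_congr rfl fun i _ => hprod i,
    Finset.prod_inv_distrib]
  exact inv_anti₀ (by positivity) (prod_one_add_abs_rpow_le_wake hc hcA x)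

theorem integrable_of_anisotropic_decay_general (A B : ℝ) (hB : 0 ≤ B)
    (hAB : 3 < A + min 1 B) (M : ℝ) (g : EuclideanSpace ℝ (Fin 3) → ℝ)
    (hg : Measurable g)
    (hbd : ∀ x, |g x| ≤ M * (1 + ‖x‖) ^ (-A) * (1 + (‖x‖ + x 0)) ^ (-B)) :
    Integrable g := by
  set c := min 1 B
  have hc : 0 ≤ c := le_min zero_le_one hB
  have hcA : 2 * c ≤ A := by linarith [min_le_left 1 B]
  have hdom := (EuclideanSpace.integrable_prod_one_add_abs_rpow_neg (ι := Fin 3)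
    (a := (A + c) / 3) (by linarith)).const_mul |M|
  refine hdom.mono' hg.aestronglyMeasurable (ae_of_all _ fun x => ?_)
  have hS : 1 ≤ 1 + wake x := by linarith [wake_nonneg x]
  calc ‖g x‖ ≤ M * (1 + ‖x‖) ^ (-A) * (1 + wake x) ^ (-B) := hbd x
    _ ≤ |M| * ((1 + ‖x‖) ^ (-A) * (1 + wake x) ^ (-c)) := by
        rw [← mul_assoc]
        gcongr
        · exact le_abs_self M
        · exact min_le_right 1 B
    _ ≤ |M| * ∏ i, (1 + |x i|) ^ (-((A + c) / 3)) := by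
        gcongr
        exact one_add_norm_rpow_neg_mul_wake_le_prod hc hcA x

theorem integrable_of_anisotropic_decay (A B : ℝ) (hA : 2 ≤ A) (hB : 0 ≤ B)
    (hAB : 3 < A + min 1 B) (M : ℝ) (g : EuclideanSpace ℝ (Fin 3) → ℝ)
    (hg : Measurable g)
    (hbd : ∀ x, |g x| ≤ M * (1 + ‖x‖) ^ (-A) * (1 + (‖x‖ + x 0)) ^ (-B)) :
    Integrable g :=
  integrable_of_anisotropic_decay_general A B hB hAB M g hg hbd
end

section
/- Let K : ℝ³ → ℝ satisfy |K(z)| ≤ [(1+|z|)(1+s(z))]^{-3/2} for all z, and suppose g : ℝ³ → ℝ satisfies |g(y)| ≤ M[(1+|y|)(1+s(y))]^{-5/2}. Then for |x| ≥ 2, the integral ∫_{B_2(x)} |K(x−y)||g(y)| dy ≤ C M [(1+|x|)(1+s(x))]^{-5/2}, with C an absolute constant (for fixed λ = 1). -/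
/-!
On `B_2(x)` we have `|x - y| ≤ 2`, so `‖y‖` and `y 0` differ from `‖x‖` and `x 0` by at most `2`;
hence the weight `(1 + |y|)(1 + s(y))` is at least `1/15` of its value at `x`, and the bound
on `g` is uniform on the ball. Since also `|K| ≤ 1`, the integral is at most `15^{5/2} |B_2| M`
times the weight of `x` to the power `-5/2`.
-/

open MeasureTheory Metric

section AnisotropicWeight

variable {ι : Type*} [Fintype ι]

/-- `(1 + |z|)(1 + s(z))` with `s(z) = |z| + z_i`. -/
noncomputable def anisotropicWeight (i : ι) (z : EuclideanSpace ℝ ι) : ℝ :=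
  (1 + ‖z‖) * (1 + (‖z‖ + z i))

lemma norm_add_apply_nonneg (z : EuclideanSpace ℝ ι) (i : ι) : 0 ≤ ‖z‖ + z i := by
  have := (abs_le.mp ((Real.norm_eq_abs _).symm.trans_le (PiLp.norm_apply_le z i))).1
  linarith

lemma one_le_anisotropicWeight (i : ι) (z : EuclideanSpace ℝ ι) : 1 ≤ anisotropicWeight i z :=
  one_le_mul_of_one_le_of_one_le (by simp) (by simpa using norm_add_apply_nonneg z i)

lemma anisotropicWeight_pos (i : ι) (z : EuclideanSpace ℝ ι) : 0 < anisotropicWeight i z :=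
  one_pos.trans_le (one_le_anisotropicWeight i z)

lemma rpow_neg_anisotropicWeight_le_one {a : ℝ} (ha : 0 ≤ a) (i : ι) (z : EuclideanSpace ℝ ι) :
    anisotropicWeight i z ^ (-a) ≤ 1 :=
  Real.rpow_le_one_of_one_le_of_nonpos (one_le_anisotropicWeight i z) (neg_nonpos.mpr ha)

lemma anisotropicWeight_le_of_dist_le {r : ℝ} (hr : 0 ≤ r) (i : ι) {x y : EuclideanSpace ℝ ι}
    (hxy : dist x y ≤ r) :
    anisotropicWeight i x ≤ (1 + r) * (1 + 2 * r) * anisotropicWeight i y := by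
  rw [dist_eq_norm] at hxy
  have hnorm : ‖x‖ ≤ ‖y‖ + r := by linarith [norm_sub_norm_le x y]
  have hcoord : x i ≤ y i + r := by
    have := (abs_le.mp ((Real.norm_eq_abs _).symm.trans_le (PiLp.norm_apply_le (x - y) i))).2
    simp only [PiLp.sub_apply] at this
    linarith
  have hy := norm_add_apply_nonneg y i
  have h₁ : 1 + ‖x‖ ≤ (1 + r) * (1 + ‖y‖) := by nlinarith [norm_nonneg y]
  have h₂ : 1 + (‖x‖ + x i) ≤ (1 + 2 * r) * (1 + (‖y‖ + y i)) := by nlinarith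
  calc anisotropicWeight i x ≤ ((1 + r) * (1 + ‖y‖)) * ((1 + 2 * r) * (1 + (‖y‖ + y i))) :=
        mul_le_mul h₁ h₂ (by linarith [norm_add_apply_nonneg x i]) (by positivity)
    _ = (1 + r) * (1 + 2 * r) * anisotropicWeight i y := by unfold anisotropicWeight; ring

lemma rpow_neg_anisotropicWeight_le_of_dist_le {a r : ℝ} (ha : 0 ≤ a) (hr : 0 ≤ r) (i : ι)
    {x y : EuclideanSpace ℝ ι} (hxy : dist x y ≤ r) :
    anisotropicWeight i y ^ (-a) ≤ ((1 + r) * (1 + 2 * r)) ^ a * anisotropicWeight i x ^ (-a) := by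
  have hc : 0 < (1 + r) * (1 + 2 * r) := by positivity
  calc anisotropicWeight i y ^ (-a)
      ≤ (anisotropicWeight i x / ((1 + r) * (1 + 2 * r))) ^ (-a) :=
        Real.rpow_le_rpow_of_nonpos (div_pos (anisotropicWeight_pos i x) hc)
          ((div_le_iff₀' hc).mpr (anisotropicWeight_le_of_dist_le hr i hxy)) (neg_nonpos.mpr ha)
    _ = ((1 + r) * (1 + 2 * r)) ^ a * anisotropicWeight i x ^ (-a) := by
        rw [Real.div_rpow (anisotropicWeight_pos i x).le hc.le, Real.rpow_neg hc.le,
          div_inv_eq_mul, mul_comm]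

theorem setIntegral_ball_abs_mul_le {K g : EuclideanSpace ℝ ι → ℝ} {M b r : ℝ} (hb : 0 ≤ b)
    (hr : 0 ≤ r) (i : ι) (hK : ∀ z, |K z| ≤ 1)
    (hg : ∀ y, |g y| ≤ M * anisotropicWeight i y ^ (-b)) (x : EuclideanSpace ℝ ι) :
    ∫ y in ball x r, |K (x - y)| * |g y| ≤
      ((1 + r) * (1 + 2 * r)) ^ b * volume.real (ball (0 : EuclideanSpace ℝ ι) r) * M *
        anisotropicWeight i x ^ (-b) := by
  have hM : 0 ≤ M := nonneg_of_mul_nonneg_left ((abs_nonneg _).trans (hg x))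
    (Real.rpow_pos_of_pos (anisotropicWeight_pos i x) _)
  have hpointwise : ∀ y ∈ ball x r, ‖|K (x - y)| * |g y|‖ ≤
      M * (((1 + r) * (1 + 2 * r)) ^ b * anisotropicWeight i x ^ (-b)) := by
    intro y hy
    rw [Real.norm_eq_abs, abs_mul, abs_abs, abs_abs, ← one_mul (M * _)]
    refine mul_le_mul (hK _) ((hg y).trans (mul_le_mul_of_nonneg_left ?_ hM)) (abs_nonneg _)
      zero_le_one
    exact rpow_neg_anisotropicWeight_le_of_dist_le hb hr i (mem_ball'.mp hy).le
  calc ∫ y in ball x r, |K (x - y)| * |g y|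
      ≤ ‖∫ y in ball x r, |K (x - y)| * |g y|‖ := le_abs_self _
    _ ≤ M * (((1 + r) * (1 + 2 * r)) ^ b * anisotropicWeight i x ^ (-b)) *
          volume.real (ball x r) :=
        norm_setIntegral_le_of_norm_le_const measure_ball_lt_top hpointwise
    _ = _ := by rw [Measure.addHaar_real_ball_center]; ring

end AnisotropicWeight

theorem local_conv_estimate :
    ∃ C > 0, ∀ (M : ℝ) (K g : EuclideanSpace ℝ (Fin 3) → ℝ),
      Measurable K → Measurable g →
      (∀ z, |K z| ≤ ((1 + ‖z‖) * (1 + (‖z‖ + z 0))) ^ (-(3 / 2 : ℝ))) →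
      (∀ y, |g y| ≤ M * ((1 + ‖y‖) * (1 + (‖y‖ + y 0))) ^ (-(5 / 2 : ℝ))) →
      ∀ x : EuclideanSpace ℝ (Fin 3), 2 ≤ ‖x‖ →
        (∫ y in Metric.ball x 2, |K (x - y)| * |g y|)
          ≤ C * M * ((1 + ‖x‖) * (1 + (‖x‖ + x 0))) ^ (-(5 / 2 : ℝ)) := by
  refine ⟨((1 + 2) * (1 + 2 * 2)) ^ (5 / 2 : ℝ) *
      volume.real (ball (0 : EuclideanSpace ℝ (Fin 3)) 2), ?_, ?_⟩
  · have : 0 < volume.real (ball (0 : EuclideanSpace ℝ (Fin 3)) 2) :=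
      ENNReal.toReal_pos (measure_ball_pos _ _ two_pos).ne' measure_ball_lt_top.ne
    positivity
  intro M K g _ _ hK hg x _
  exact setIntegral_ball_abs_mul_le (by norm_num) zero_le_two 0
    (fun z ↦ (hK z).trans (rpow_neg_anisotropicWeight_le_one (by norm_num) 0 z)) hg x
end

section
/- Let A > 0 and let h : ℝ³ → ℝ satisfy |h(z)| ≤ |z|^{-4} for |z| ≥ 1. If g : ℝ³ → ℝ satisfies |g(y)| ≤ M(1+|y|)^{-9/2}, then for all x with |x| ≥ 2, ∫_{|x−y|≥1} |h(x−y)||g(y)| dy ≤ C M (1+|x|)^{-4}, with C an absolute constant. -/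
/-!
Split the integration domain at `‖y‖ = ‖x‖ / 2`. Near the origin, `‖x - y‖` is comparable to
`1 + ‖x‖`, so the kernel contributes the factor `(1 + ‖x‖)⁻⁴` and `g` is integrable. Far from
the origin, `1 + ‖y‖` is comparable to `1 + ‖x‖`, so `g` contributes that factor and the kernel
`‖z‖⁻⁴` is integrable on `‖z‖ ≥ 1` because `4 > 3`. Summing the two pointwise majorants gives an
integrable function of `y` whose integral is `C M (1 + ‖x‖)⁻⁴`.
-/

open MeasureTheory Module

lemma Real.rpow_neg_le_mul_rpow_neg {a b c r : ℝ} (ha : 0 < a) (hc : 0 < c) (hab : a ≤ c * b)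
    (hr : 0 ≤ r) : b ^ (-r) ≤ c ^ r * a ^ (-r) :=
  calc b ^ (-r) ≤ (a / c) ^ (-r) :=
        Real.rpow_le_rpow_of_nonpos (by positivity) (by rwa [div_le_iff₀' hc]) (by linarith)
    _ = c ^ r * a ^ (-r) := by
        rw [Real.div_rpow ha.le hc.le, Real.rpow_neg hc.le, div_inv_eq_mul, mul_comm]

section Majorant

variable {E : Type*} [NormedAddCommGroup E] {p q M : ℝ} {h g : E → ℝ}

lemma nonneg_of_abs_le_mul_one_add_norm_rpow (hg : ∀ y, |g y| ≤ M * (1 + ‖y‖) ^ (-q)) :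
    0 ≤ M := by
  simpa using (abs_nonneg _).trans (hg 0)

lemma abs_mul_abs_le_far_field_majorant (hp : 0 ≤ p) (hpq : p ≤ q)
    (hh : ∀ z, 1 ≤ ‖z‖ → |h z| ≤ ‖z‖ ^ (-p)) (hg : ∀ y, |g y| ≤ M * (1 + ‖y‖) ^ (-q))
    {x y : E} (hxy : 1 ≤ ‖x - y‖) :
    |h (x - y)| * |g y| ≤ M * (1 + ‖x‖) ^ (-p) *
      (3 ^ p * (1 + ‖y‖) ^ (-q) + 2 ^ p * {z : E | 1 ≤ ‖z‖}.indicator (‖·‖ ^ (-p)) (x - y)) := by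
  have hM := nonneg_of_abs_le_mul_one_add_norm_rpow hg
  have hker := hh _ hxy
  have hrev : ‖x‖ - ‖y‖ ≤ ‖x - y‖ := norm_sub_norm_le x y
  rw [Set.indicator_of_mem (by exact hxy)]
  rcases le_or_gt ‖y‖ (‖x‖ / 2) with hnear | hfar
  · -- `1 + ‖x‖ ≤ 3 ‖x - y‖` uses both `1 ≤ ‖x - y‖` and `‖x‖ / 2 ≤ ‖x - y‖`
    have hker' : |h (x - y)| ≤ 3 ^ p * (1 + ‖x‖) ^ (-p) :=
      hker.trans (Real.rpow_neg_le_mul_rpow_neg (by positivity) three_pos (by linarith) hp)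
    calc |h (x - y)| * |g y| ≤ 3 ^ p * (1 + ‖x‖) ^ (-p) * (M * (1 + ‖y‖) ^ (-q)) :=
          mul_le_mul hker' (hg y) (abs_nonneg _) (by positivity)
      _ ≤ _ := by
          nlinarith [show 0 ≤ M * (1 + ‖x‖) ^ (-p) * 2 ^ p * ‖x - y‖ ^ (-p) by positivity]
  · have hweight : |g y| ≤ M * (2 ^ p * (1 + ‖x‖) ^ (-p)) :=
      calc |g y| ≤ M * (1 + ‖y‖) ^ (-q) := hg y
        _ ≤ M * (1 + ‖y‖) ^ (-p) := by
          gcongr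
          linarith [norm_nonneg y]
        _ ≤ M * (2 ^ p * (1 + ‖x‖) ^ (-p)) := by
          gcongr
          exact Real.rpow_neg_le_mul_rpow_neg (by positivity) two_pos (by linarith) hp
    calc |h (x - y)| * |g y| ≤ ‖x - y‖ ^ (-p) * (M * (2 ^ p * (1 + ‖x‖) ^ (-p))) :=
          mul_le_mul hker hweight (abs_nonneg _) (by positivity)
      _ ≤ _ := by
          nlinarith [show 0 ≤ M * (1 + ‖x‖) ^ (-p) * 3 ^ p * (1 + ‖y‖) ^ (-q) by positivity]

end Majorant

section Constant

variable {E : Type*} [NormedAddCommGroup E] [MeasurableSpace E] (μ : Measure E)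

noncomputable def farFieldConst (p q : ℝ) : ℝ :=
  3 ^ p * ∫ y, (1 + ‖y‖) ^ (-q) ∂μ + 2 ^ p * ∫ z in {z : E | 1 ≤ ‖z‖}, ‖z‖ ^ (-p) ∂μ

lemma farFieldConst_nonneg (p q : ℝ) : 0 ≤ farFieldConst μ p q := by
  have h₁ : 0 ≤ ∫ y, (1 + ‖y‖) ^ (-q) ∂μ := integral_nonneg fun y ↦ by positivity
  have h₂ : 0 ≤ ∫ z in {z : E | 1 ≤ ‖z‖}, ‖z‖ ^ (-p) ∂μ := integral_nonneg fun z ↦ by positivity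
  unfold farFieldConst
  positivity

end Constant

section Haar

variable {E : Type*} [NormedAddCommGroup E] [NormedSpace ℝ E] [FiniteDimensional ℝ E]
  [MeasurableSpace E] [BorelSpace E] (μ : Measure E) [μ.IsAddHaarMeasure]

lemma integrable_indicator_norm_rpow_neg {r : ℝ} (hr : (finrank ℝ E : ℝ) < r) :
    Integrable ({z : E | 1 ≤ ‖z‖}.indicator (‖·‖ ^ (-r))) μ := by
  have hmeas : MeasurableSet {z : E | 1 ≤ ‖z‖} := measurableSet_le measurable_const measurable_norm
  refine ((integrable_one_add_norm hr).const_mul (2 ^ r)).mono'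
    ((Measurable.indicator (by fun_prop) hmeas).aestronglyMeasurable) (ae_of_all _ fun z ↦ ?_)
  by_cases hz : 1 ≤ ‖z‖
  · rw [Set.indicator_of_mem (by exact hz), Real.norm_of_nonneg (by positivity)]
    exact Real.rpow_neg_le_mul_rpow_neg (by positivity) two_pos (by linarith)
      ((Nat.cast_nonneg _).trans hr.le)
  · rw [Set.indicator_of_notMem (by exact hz), norm_zero]
    positivity

theorem setIntegral_far_field_conv_le {p q M : ℝ} {h g : E → ℝ} (hp : (finrank ℝ E : ℝ) < p)
    (hpq : p ≤ q) (hh : ∀ z, 1 ≤ ‖z‖ → |h z| ≤ ‖z‖ ^ (-p))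
    (hg : ∀ y, |g y| ≤ M * (1 + ‖y‖) ^ (-q)) (x : E) :
    ∫ y in {y | 1 ≤ ‖x - y‖}, |h (x - y)| * |g y| ∂μ ≤
      farFieldConst μ p q * M * (1 + ‖x‖) ^ (-p) := by
  have hM := nonneg_of_abs_le_mul_one_add_norm_rpow hg
  set F : E → ℝ := {z : E | 1 ≤ ‖z‖}.indicator (‖·‖ ^ (-p))
  have hF0 : ∀ z, 0 ≤ F z := Set.indicator_nonneg fun z _ ↦ by positivity
  have hF : Integrable (fun y ↦ F (x - y)) μ :=
    (integrable_indicator_norm_rpow_neg μ hp).comp_sub_left x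
  have hW : Integrable (fun y : E ↦ (1 + ‖y‖) ^ (-q)) μ :=
    integrable_one_add_norm (hp.trans_le hpq)
  set majorant : E → ℝ :=
    fun y ↦ M * (1 + ‖x‖) ^ (-p) * (3 ^ p * (1 + ‖y‖) ^ (-q) + 2 ^ p * F (x - y))
  have hmaj_int : Integrable majorant μ := ((hW.const_mul _).add (hF.const_mul _)).const_mul _
  have hmaj_nonneg : ∀ y, 0 ≤ majorant y := fun y ↦ by have := hF0 (x - y); positivity
  calc ∫ y in {y | 1 ≤ ‖x - y‖}, |h (x - y)| * |g y| ∂μ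
      ≤ ∫ y in {y | 1 ≤ ‖x - y‖}, majorant y ∂μ :=
        integral_mono_of_nonneg (ae_of_all _ fun y ↦ by positivity) hmaj_int.integrableOn
          (ae_restrict_of_forall_mem (measurableSet_le measurable_const (by fun_prop))
            fun y hy ↦ abs_mul_abs_le_far_field_majorant ((Nat.cast_nonneg _).trans hp.le) hpq
              hh hg hy)
    _ ≤ ∫ y, majorant y ∂μ := setIntegral_le_integral hmaj_int (ae_of_all _ hmaj_nonneg)
    _ = _ := by
        rw [integral_const_mul, integral_add (hW.const_mul _) (hF.const_mul _),
          integral_const_mul, integral_const_mul, integral_sub_left_eq_self F μ x,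
          integral_indicator (measurableSet_le measurable_const measurable_norm), farFieldConst]
        ring

end Haar

theorem far_field_conv_estimate :
    ∃ C > 0, ∀ (M : ℝ) (h g : EuclideanSpace ℝ (Fin 3) → ℝ),
      Measurable h → Measurable g →
      (∀ z, 1 ≤ ‖z‖ → |h z| ≤ ‖z‖ ^ (-(4 : ℝ))) →
      (∀ y, |g y| ≤ M * (1 + ‖y‖) ^ (-(9 / 2 : ℝ))) →
      ∀ x : EuclideanSpace ℝ (Fin 3), 2 ≤ ‖x‖ →
        (∫ y in {y : EuclideanSpace ℝ (Fin 3) | 1 ≤ ‖x - y‖}, |h (x - y)| * |g y|)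
          ≤ C * M * (1 + ‖x‖) ^ (-(4 : ℝ)) := by
  set E := EuclideanSpace ℝ (Fin 3)
  have hK := farFieldConst_nonneg (volume : Measure E) 4 (9 / 2)
  refine ⟨farFieldConst volume 4 (9 / 2) + 1, by positivity, fun M h g _ _ hh hg x _ ↦ ?_⟩
  have hM := nonneg_of_abs_le_mul_one_add_norm_rpow hg
  have hdim : (finrank ℝ E : ℝ) < 4 := by simp [E]; norm_num
  calc _ ≤ farFieldConst volume 4 (9 / 2) * M * (1 + ‖x‖) ^ (-(4 : ℝ)) :=
        setIntegral_far_field_conv_le volume hdim (by norm_num) hh hg x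
    _ ≤ (farFieldConst volume 4 (9 / 2) + 1) * M * (1 + ‖x‖) ^ (-(4 : ℝ)) := by gcongr; linarith
end
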